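/- Under the setting below, for every reference point z ∈ 𝒳, every α ≥ 0, and every x ∈ 𝒪, the conceptual surrogate satisfies the two-sided bound: f(x) + ((α − τ)/2)‖x − z‖² ≤ E_{ε∼P_ε}[F̃_α(x, ε; z)] ≤ f(x) + ((α + τ)/2)‖x − z‖², where τ = L_φ(L_c + ℓ L_q); moreover F̃_α(z, ε; z) = φ(z, c(z)+Q(z)ε) for every ε, and for α > 0 the function F̃_α(·, ε; z) is α-strongly convex. (Proposition 4.) -/

import Mathlib

open MeasureTheory
open scoped RealInnerProductSpace

noncomputable section

/-- The continuous linear map `ℝ^d → ℝ^ℓ` determined by its `ℓ` rows (as functionals). -/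
def rowCLM {d l : ℕ} (rows : Fin l → (EuclideanSpace ℝ (Fin d) →L[ℝ] ℝ)) :
    EuclideanSpace ℝ (Fin d) →L[ℝ] EuclideanSpace ℝ (Fin l) :=
  (((EuclideanSpace.equiv (Fin l) ℝ).symm :
      (Fin l → ℝ) →L[ℝ] EuclideanSpace ℝ (Fin l))).comp (ContinuousLinearMap.pi rows)

/-- `Q(x)`, the `ℓ×ℓ` matrix whose rows are `q_1(x)ᵀ, …, q_ℓ(x)ᵀ`, viewed as a linear map. -/
def Qop {d l : ℕ} (q : Fin l → EuclideanSpace ℝ (Fin d) → EuclideanSpace ℝ (Fin l))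
    (x : EuclideanSpace ℝ (Fin d)) :
    EuclideanSpace ℝ (Fin l) →L[ℝ] EuclideanSpace ℝ (Fin l) :=
  rowCLM (fun j => innerSL ℝ (q j x))

/-- `G(z,ε)`, the `ℓ×d` matrix whose `j`-th row is `εᵀ∇q_j(z)`. -/
def Gop {d l : ℕ} (q : Fin l → EuclideanSpace ℝ (Fin d) → EuclideanSpace ℝ (Fin l))
    (z : EuclideanSpace ℝ (Fin d)) (ε : EuclideanSpace ℝ (Fin l)) :
    EuclideanSpace ℝ (Fin d) →L[ℝ] EuclideanSpace ℝ (Fin l) :=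
  rowCLM (fun j => (innerSL ℝ ε).comp (fderiv ℝ (q j) z))

/-- The conceptual surrogate
`F̃_α(x,ε;z) = φ(x, c(z)+∇c(z)(x−z)+Q(z)ε+G(z,ε)(x−z)) + (α/2)‖x−z‖²`. -/
def Ftil {d l : ℕ} (φ : EuclideanSpace ℝ (Fin d) → EuclideanSpace ℝ (Fin l) → ℝ)
    (c : EuclideanSpace ℝ (Fin d) → EuclideanSpace ℝ (Fin l))
    (q : Fin l → EuclideanSpace ℝ (Fin d) → EuclideanSpace ℝ (Fin l))
    (α : ℝ) (z : EuclideanSpace ℝ (Fin d)) (ε : EuclideanSpace ℝ (Fin l))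
    (x : EuclideanSpace ℝ (Fin d)) : ℝ :=
  φ x (c z + fderiv ℝ c z (x - z) + Qop q z ε + Gop q z ε (x - z)) + α / 2 * ‖x - z‖ ^ 2


/-! The surrogate differs from `φ(x, c(x) + Q(x)ε)` only through the first-order Taylor
expansions of `c` and of the `q_j` around `z`. A Lipschitz Jacobian bounds each Taylor remainder
by `L/2 ‖x - z‖²`, so the Lipschitz continuity of `φ` bounds the pointwise gap by
`L_φ (L_c/2 + √ℓ L_q/2 ‖ε‖) ‖x - z‖²`; taking expectations and using
`E‖ε‖ ≤ √(E‖ε‖²) = √ℓ` gives `τ/2 ‖x - z‖²`. For fixed `ε` the linearised argument is affine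
in `x`, so joint convexity of `φ` makes `F̃_α - α/2 ‖·‖²` convex, the difference
`α/2 ‖x - z‖² - α/2 ‖x‖²` being affine. -/

open Set

section Taylor

variable {E F : Type*} [NormedAddCommGroup E] [NormedSpace ℝ E]
  [NormedAddCommGroup F] [NormedSpace ℝ F]

theorem norm_image_sub_sub_fderiv_le_of_lipschitz_fderiv {g : E → F} {O : Set E}
    (hO : Convex ℝ O) (hg : ∀ y ∈ O, DifferentiableAt ℝ g y) {L : ℝ}
    (hL : ∀ a ∈ O, ∀ b ∈ O, ‖fderiv ℝ g a - fderiv ℝ g b‖ ≤ L * ‖a - b‖)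
    {z x : E} (hz : z ∈ O) (hx : x ∈ O) :
    ‖g x - g z - fderiv ℝ g z (x - z)‖ ≤ L / 2 * ‖x - z‖ ^ 2 := by
  set v := x - z
  have hseg : ∀ t ∈ Icc (0 : ℝ) 1, z + t • v ∈ O := fun t ht => hO.add_smul_sub_mem hz hx ht
  let R : ℝ → F := fun t => g (z + t • v) - g z - t • fderiv ℝ g z v
  have hderiv : ∀ t ∈ Icc (0 : ℝ) 1,
      HasDerivAt R ((fderiv ℝ g (z + t • v) - fderiv ℝ g z) v) t := by
    intro t ht
    have hpath : HasDerivAt (fun t : ℝ => z + t • v) v t := by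
      simpa using ((hasDerivAt_id t).smul_const v).const_add z
    exact (((hg _ (hseg t ht)).hasFDerivAt.comp_hasDerivAt t hpath).sub_const (g z)).fun_sub
      ((hasDerivAt_id t).smul_const (fderiv ℝ g z v)) |>.congr_deriv (by simp)
  have hbound : ∀ t ∈ Ico (0 : ℝ) 1,
      ‖(fderiv ℝ g (z + t • v) - fderiv ℝ g z) v‖ ≤ L * t * ‖v‖ ^ 2 := by
    intro t ht
    calc _ ≤ ‖fderiv ℝ g (z + t • v) - fderiv ℝ g z‖ * ‖v‖ := ContinuousLinearMap.le_opNorm _ _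
      _ ≤ L * ‖t • v‖ * ‖v‖ := by
        gcongr; simpa using hL _ (hseg t (Ico_subset_Icc_self ht)) _ hz
      _ = L * t * ‖v‖ ^ 2 := by rw [norm_smul, Real.norm_of_nonneg ht.1]; ring
  have hquad : ∀ t : ℝ, HasDerivAt (fun t => L / 2 * t ^ 2 * ‖v‖ ^ 2) (L * t * ‖v‖ ^ 2) t :=
    fun t => (((hasDerivAt_pow 2 t).const_mul (L / 2)).mul_const (‖v‖ ^ 2)).congr_deriv
      (by ring)
  have := image_norm_le_of_norm_deriv_right_le_deriv_boundary
    (fun t ht => (hderiv t ht).continuousAt.continuousWithinAt)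
    (fun t ht => (hderiv t (Ico_subset_Icc_self ht)).hasDerivWithinAt)
    (by simp [R]) hquad hbound (right_mem_Icc.2 zero_le_one)
  simpa [R, v] using this

end Taylor

section Moments

variable {Ω : Type*} [MeasurableSpace Ω] {μ : Measure Ω}

theorem integral_le_sqrt_integral_sq [IsProbabilityMeasure μ] {X : Ω → ℝ} (hX : MemLp X 2 μ) :
    ∫ ω, X ω ∂μ ≤ √(∫ ω, X ω ^ 2 ∂μ) := by
  have hvar := ProbabilityTheory.variance_nonneg X μ
  rw [ProbabilityTheory.variance_eq_sub hX, sub_nonneg] at hvar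
  exact Real.le_sqrt_of_sq_le (by simpa using hvar)

theorem abs_integral_sub_le_of_abs_sub_le [IsProbabilityMeasure μ] {f g N : Ω → ℝ}
    (hf : Integrable f μ) (hg : Integrable g μ) (hN : Integrable N μ) {a b m : ℝ} (hb : 0 ≤ b)
    (h : ∀ ω, |f ω - g ω| ≤ a + b * N ω) (hm : ∫ ω, N ω ∂μ ≤ m) :
    |∫ ω, f ω ∂μ - ∫ ω, g ω ∂μ| ≤ a + b * m :=
  calc |∫ ω, f ω ∂μ - ∫ ω, g ω ∂μ| = ‖∫ ω, (f ω - g ω) ∂μ‖ := by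
        rw [integral_sub hf hg, Real.norm_eq_abs]
    _ ≤ ∫ ω, (a + b * N ω) ∂μ :=
        norm_integral_le_of_norm_le ((integrable_const a).add (hN.const_mul b))
          (.of_forall fun ω => (Real.norm_eq_abs _).trans_le (h ω))
    _ = a + b * ∫ ω, N ω ∂μ := by
        rw [integral_add (integrable_const a) (hN.const_mul b), integral_const_mul]; simp
    _ ≤ a + b * m := by gcongr

theorem EuclideanSpace.integral_norm_sq_eq_sum {ι : Type*} [Fintype ι]
    {μ : Measure (EuclideanSpace ℝ ι)} (h : Integrable (fun ε => ‖ε‖ ^ 2) μ) :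
    ∫ ε, ‖ε‖ ^ 2 ∂μ = ∑ i, ∫ ε, ε i ^ 2 ∂μ := by
  have hcoord : ∀ i, Integrable (fun ε : EuclideanSpace ℝ ι => ε i ^ 2) μ := fun i =>
    h.mono' ((EuclideanSpace.proj i).continuous.pow 2).aestronglyMeasurable
      (.of_forall fun ε => by
        simpa [sq_abs] using pow_le_pow_left₀ (abs_nonneg _) (PiLp.norm_apply_le ε i) 2)
  simp_rw [EuclideanSpace.real_norm_sq_eq]
  exact integral_finsetSum _ fun i _ => hcoord i

end Moments

theorem EuclideanSpace.norm_le_sqrt_card_mul {ι : Type*} [Fintype ι] {u : EuclideanSpace ℝ ι}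
    {M : ℝ} (hM : 0 ≤ M) (h : ∀ i, |u i| ≤ M) : ‖u‖ ≤ √(Fintype.card ι) * M := by
  rw [← Real.sqrt_sq hM, ← Real.sqrt_mul (Nat.cast_nonneg _), ← Real.sqrt_sq (norm_nonneg u)]
  gcongr
  rw [EuclideanSpace.real_norm_sq_eq]
  calc ∑ i, u i ^ 2 ≤ ∑ _i : ι, M ^ 2 :=
        Finset.sum_le_sum fun i _ => sq_le_sq' (abs_le.mp (h i)).1 (abs_le.mp (h i)).2
    _ = Fintype.card ι * M ^ 2 := by simp

theorem ConvexOn.comp_graph {E F : Type*} [AddCommGroup E] [Module ℝ E] [AddCommGroup F]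
    [Module ℝ F] {s : Set E} {f : E → F → ℝ} (hf : ConvexOn ℝ (s ×ˢ univ) fun p => f p.1 p.2)
    (A : E →ᵃ[ℝ] F) : ConvexOn ℝ s fun x => f x (A x) := by
  have hpre : (AffineMap.id ℝ E).prod A ⁻¹' (s ×ˢ univ) = s := by ext; simp
  exact hpre ▸ hf.comp_affineMap _

section Surrogate

variable {d l : ℕ} {O : Set (EuclideanSpace ℝ (Fin d))}
  {φ : EuclideanSpace ℝ (Fin d) → EuclideanSpace ℝ (Fin l) → ℝ}
  {c : EuclideanSpace ℝ (Fin d) → EuclideanSpace ℝ (Fin l)}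
  {q : Fin l → EuclideanSpace ℝ (Fin d) → EuclideanSpace ℝ (Fin l)}

theorem Qop_add_Gop_sub_Qop_apply (z x : EuclideanSpace ℝ (Fin d))
    (ε : EuclideanSpace ℝ (Fin l)) (j : Fin l) :
    (Qop q z ε + Gop q z ε (x - z) - Qop q x ε) j =
      ⟪q j z + fderiv ℝ (q j) z (x - z) - q j x, ε⟫ := by
  simp [Qop, Gop, rowCLM, inner_add_left, inner_sub_left, inner_sub_right, real_inner_comm]

theorem norm_Qop_add_Gop_sub_Qop_le (hO : Convex ℝ O)
    (hq : ∀ j, ∀ y ∈ O, DifferentiableAt ℝ (q j) y) {Lq : ℝ} (hLq : 0 ≤ Lq)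
    (hqJ : ∀ j, ∀ x ∈ O, ∀ y ∈ O, ‖fderiv ℝ (q j) x - fderiv ℝ (q j) y‖ ≤ Lq * ‖x - y‖)
    {z x : EuclideanSpace ℝ (Fin d)} (hz : z ∈ O) (hx : x ∈ O) (ε : EuclideanSpace ℝ (Fin l)) :
    ‖Qop q z ε + Gop q z ε (x - z) - Qop q x ε‖ ≤ √l * (Lq / 2 * ‖x - z‖ ^ 2 * ‖ε‖) := by
  refine (EuclideanSpace.norm_le_sqrt_card_mul (M := Lq / 2 * ‖x - z‖ ^ 2 * ‖ε‖)
    (by positivity) fun j => ?_).trans_eq (by simp)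
  rw [Qop_add_Gop_sub_Qop_apply]
  calc |⟪q j z + fderiv ℝ (q j) z (x - z) - q j x, ε⟫|
      ≤ ‖q j z + fderiv ℝ (q j) z (x - z) - q j x‖ * ‖ε‖ := abs_real_inner_le_norm _ _
    _ ≤ Lq / 2 * ‖x - z‖ ^ 2 * ‖ε‖ := by
      gcongr
      rw [← norm_neg, neg_sub, sub_add_eq_sub_sub]
      exact norm_image_sub_sub_fderiv_le_of_lipschitz_fderiv hO (hq j) (hqJ j) hz hx

theorem abs_Ftil_sub_le (hO : Convex ℝ O) {x : EuclideanSpace ℝ (Fin d)} {Lφ : ℝ}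
    (hLφ : 0 ≤ Lφ) (hφ : ∀ u v, |φ x u - φ x v| ≤ Lφ * ‖u - v‖)
    (hc : ∀ y ∈ O, DifferentiableAt ℝ c y) {Lc : ℝ}
    (hcJ : ∀ x ∈ O, ∀ y ∈ O, ‖fderiv ℝ c x - fderiv ℝ c y‖ ≤ Lc * ‖x - y‖)
    (hq : ∀ j, ∀ y ∈ O, DifferentiableAt ℝ (q j) y) {Lq : ℝ} (hLq : 0 ≤ Lq)
    (hqJ : ∀ j, ∀ x ∈ O, ∀ y ∈ O, ‖fderiv ℝ (q j) x - fderiv ℝ (q j) y‖ ≤ Lq * ‖x - y‖)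
    {z : EuclideanSpace ℝ (Fin d)} (hz : z ∈ O) (hx : x ∈ O) (α : ℝ)
    (ε : EuclideanSpace ℝ (Fin l)) :
    |Ftil φ c q α z ε x - α / 2 * ‖x - z‖ ^ 2 - φ x (c x + Qop q x ε)| ≤
      Lφ * (Lc / 2 + √l * (Lq / 2) * ‖ε‖) * ‖x - z‖ ^ 2 := by
  have hsplit : c z + fderiv ℝ c z (x - z) + Qop q z ε + Gop q z ε (x - z) - (c x + Qop q x ε) =
      -(c x - c z - fderiv ℝ c z (x - z)) + (Qop q z ε + Gop q z ε (x - z) - Qop q x ε) := by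
    abel
  have hlin : ‖c z + fderiv ℝ c z (x - z) + Qop q z ε + Gop q z ε (x - z) - (c x + Qop q x ε)‖ ≤
      (Lc / 2 + √l * (Lq / 2) * ‖ε‖) * ‖x - z‖ ^ 2 := by
    rw [hsplit]
    calc _ ≤ ‖c x - c z - fderiv ℝ c z (x - z)‖ + ‖Qop q z ε + Gop q z ε (x - z) - Qop q x ε‖ :=
          (norm_add_le _ _).trans_eq (by rw [norm_neg])
      _ ≤ Lc / 2 * ‖x - z‖ ^ 2 + √l * (Lq / 2 * ‖x - z‖ ^ 2 * ‖ε‖) :=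
          add_le_add (norm_image_sub_sub_fderiv_le_of_lipschitz_fderiv hO hc hcJ hz hx)
            (norm_Qop_add_Gop_sub_Qop_le hO hq hLq hqJ hz hx ε)
      _ = _ := by ring
  calc _ = |φ x (c z + fderiv ℝ c z (x - z) + Qop q z ε + Gop q z ε (x - z)) -
        φ x (c x + Qop q x ε)| := by simp [Ftil]
    _ ≤ _ := (hφ _ _).trans (by rw [mul_assoc]; exact mul_le_mul_of_nonneg_left hlin hLφ)

theorem Ftil_self (α : ℝ) (z : EuclideanSpace ℝ (Fin d)) (ε : EuclideanSpace ℝ (Fin l)) :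
    Ftil φ c q α z ε z = φ z (c z + Qop q z ε) := by
  simp [Ftil]

theorem convexOn_Ftil_sub_sq (hφ : ConvexOn ℝ (O ×ˢ univ) fun p => φ p.1 p.2) (α : ℝ)
    (z : EuclideanSpace ℝ (Fin d)) (ε : EuclideanSpace ℝ (Fin l)) :
    ConvexOn ℝ O fun x => Ftil φ c q α z ε x - α / 2 * ‖x‖ ^ 2 := by
  let T := fderiv ℝ c z + Gop q z ε
  let A : EuclideanSpace ℝ (Fin d) →ᵃ[ℝ] EuclideanSpace ℝ (Fin l) :=
    ⟨fun y => c z + Qop q z ε + T (y - z), T.toLinearMap, fun p v => by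
      simp only [vadd_eq_add, add_sub_assoc, map_add, ContinuousLinearMap.coe_coe]; abel⟩
  let ℓ : EuclideanSpace ℝ (Fin d) →ₗ[ℝ] ℝ := (-α) • (innerSL ℝ z).toLinearMap
  have hdecomp : (fun x => Ftil φ c q α z ε x - α / 2 * ‖x‖ ^ 2) =
      fun y => φ y (A y) + ℓ y + α / 2 * ‖z‖ ^ 2 := by
    funext y
    have harg : c z + fderiv ℝ c z (y - z) + Qop q z ε + Gop q z ε (y - z) = A y := by
      simp only [A, T, AffineMap.coe_mk, _root_.add_apply]; abel
    simp only [Ftil, harg, norm_sub_sq_real]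
    simp only [ℓ, LinearMap.smul_apply, ContinuousLinearMap.coe_coe, innerSL_apply_apply,
      real_inner_comm, smul_eq_mul]
    ring
  have hA := hφ.comp_graph A
  rw [hdecomp]
  exact (hA.add (ℓ.convexOn hA.1)).add_const _

end Surrogate

theorem conceptual_surrogate_properties_general {d l : ℕ}
    (X O : Set (EuclideanSpace ℝ (Fin d)))
    (hXO : X ⊆ O)
    (hOopen : IsOpen O) (hOconv : Convex ℝ O)
    (φ : EuclideanSpace ℝ (Fin d) → EuclideanSpace ℝ (Fin l) → ℝ)
    (Lφ Lc Lq : ℝ) (hLφ : 0 ≤ Lφ) (hLq : 0 ≤ Lq)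
    (hφconv : ConvexOn ℝ (O ×ˢ (Set.univ : Set (EuclideanSpace ℝ (Fin l))))
      (fun p => φ p.1 p.2))
    (hφlip : ∀ x ∈ O, ∀ y ∈ O, ∀ u v : EuclideanSpace ℝ (Fin l),
      |φ x u - φ y v| ≤ Lφ * Real.sqrt (‖x - y‖ ^ 2 + ‖u - v‖ ^ 2))
    (c : EuclideanSpace ℝ (Fin d) → EuclideanSpace ℝ (Fin l))
    (hc : ContDiffOn ℝ 1 c O)
    (hcJ : ∀ x ∈ O, ∀ y ∈ O, ‖fderiv ℝ c x - fderiv ℝ c y‖ ≤ Lc * ‖x - y‖)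
    (q : Fin l → EuclideanSpace ℝ (Fin d) → EuclideanSpace ℝ (Fin l))
    (hq : ∀ j, ContDiffOn ℝ 1 (q j) O)
    (hqJ : ∀ j, ∀ x ∈ O, ∀ y ∈ O, ‖fderiv ℝ (q j) x - fderiv ℝ (q j) y‖ ≤ Lq * ‖x - y‖)
    (Pε : Measure (EuclideanSpace ℝ (Fin l))) [IsProbabilityMeasure Pε]
    (hsq : Integrable (fun ε : EuclideanSpace ℝ (Fin l) => ‖ε‖ ^ 2) Pε)
    (hcov : ∀ i j : Fin l, ∫ ε, ε i * ε j ∂Pε = if i = j then 1 else 0)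
    (hintf : ∀ x ∈ O, Integrable (fun ε => φ x (c x + Qop q x ε)) Pε)
    (hintF : ∀ z ∈ X, ∀ α : ℝ, ∀ x ∈ O, Integrable (fun ε => Ftil φ c q α z ε x) Pε)
    (τ : ℝ) (hτdef : τ = Lφ * (Lc + (l : ℝ) * Lq)) :
    ∀ z ∈ X, ∀ α : ℝ, 0 ≤ α →
      ((∀ x ∈ O,
          (∫ ε, φ x (c x + Qop q x ε) ∂Pε) + (α - τ) / 2 * ‖x - z‖ ^ 2 ≤
            ∫ ε, Ftil φ c q α z ε x ∂Pε ∧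
          ∫ ε, Ftil φ c q α z ε x ∂Pε ≤
            (∫ ε, φ x (c x + Qop q x ε) ∂Pε) + (α + τ) / 2 * ‖x - z‖ ^ 2) ∧
       (∀ ε, Ftil φ c q α z ε z = φ z (c z + Qop q z ε)) ∧
       (0 < α → ∀ ε, ConvexOn ℝ O (fun x => Ftil φ c q α z ε x - α / 2 * ‖x‖ ^ 2))) := by
  intro z hz α _
  refine ⟨fun x hx => ?_, Ftil_self α z, fun _ ε => convexOn_Ftil_sub_sq hφconv α z ε⟩
  have hcD : ∀ y ∈ O, DifferentiableAt ℝ c y := fun y hy =>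
    (hc.differentiableOn one_ne_zero).differentiableAt (hOopen.mem_nhds hy)
  have hqD : ∀ j, ∀ y ∈ O, DifferentiableAt ℝ (q j) y := fun j y hy =>
    ((hq j).differentiableOn one_ne_zero).differentiableAt (hOopen.mem_nhds hy)
  have hφx : ∀ u v, |φ x u - φ x v| ≤ Lφ * ‖u - v‖ := fun u v => by
    simpa using hφlip x hx x hx u v
  have hnormL2 : MemLp (fun ε : EuclideanSpace ℝ (Fin l) => ‖ε‖) 2 Pε :=
    (memLp_two_iff_integrable_sq continuous_norm.aestronglyMeasurable).2 hsq
  have hsecond : ∫ ε, ‖ε‖ ^ 2 ∂Pε = l := by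
    rw [EuclideanSpace.integral_norm_sq_eq_sum hsq]
    simp [sq, hcov]
  have hmoment : ∫ ε, ‖ε‖ ∂Pε ≤ √l := hsecond ▸ integral_le_sqrt_integral_sq hnormL2
  have hbound := abs_integral_sub_le_of_abs_sub_le
    (f := fun ε => Ftil φ c q α z ε x - α / 2 * ‖x - z‖ ^ 2)
    (a := Lφ * Lc / 2 * ‖x - z‖ ^ 2) (b := Lφ * √l * Lq / 2 * ‖x - z‖ ^ 2)
    ((hintF z hz α x hx).sub (integrable_const _)) (hintf x hx)
    (hnormL2.integrable one_le_two) (by positivity)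
    (fun ε => (abs_Ftil_sub_le hOconv hLφ hφx hcD hcJ hqD hLq hqJ (hXO hz) hx α ε).trans_eq
      (by ring)) hmoment
  rw [integral_sub (hintF z hz α x hx) (integrable_const _), integral_const] at hbound
  have hτ : Lφ * Lc / 2 * ‖x - z‖ ^ 2 + Lφ * √l * Lq / 2 * ‖x - z‖ ^ 2 * √l =
      τ / 2 * ‖x - z‖ ^ 2 := by
    rw [hτdef]
    linear_combination Lφ * Lq / 2 * ‖x - z‖ ^ 2 * Real.mul_self_sqrt (Nat.cast_nonneg l)
  obtain ⟨hlo, hhi⟩ := abs_le.mp (hbound.trans_eq hτ)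
  simp only [probReal_univ, one_smul] at hlo hhi
  constructor <;> linarith

/-- **Proposition 4.** Under Assumption 1, for every reference point `z ∈ 𝒳`, every `α ≥ 0`
and every `x ∈ 𝒪`, the conceptual surrogate satisfies the two-sided bound
`f(x) + ((α−τ)/2)‖x−z‖² ≤ E_ε[F̃_α(x,ε;z)] ≤ f(x) + ((α+τ)/2)‖x−z‖²` with
`τ = L_φ(L_c + ℓ L_q)`; moreover `F̃_α(z,ε;z) = φ(z, c(z)+Q(z)ε)` for every `ε`, and for
`α > 0` the function `F̃_α(·,ε;z)` is `α`-strongly convex. -/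
theorem conceptual_surrogate_properties {d l : ℕ}
    (X O : Set (EuclideanSpace ℝ (Fin d)))
    (hXO : X ⊆ O) (hXne : X.Nonempty) (hXcpt : IsCompact X) (hXconv : Convex ℝ X)
    (hOopen : IsOpen O) (hOconv : Convex ℝ O)
    (φ : EuclideanSpace ℝ (Fin d) → EuclideanSpace ℝ (Fin l) → ℝ)
    (Lφ Lc Lq : ℝ) (hLφ : 0 ≤ Lφ) (hLc : 0 ≤ Lc) (hLq : 0 ≤ Lq)
    (hφconv : ConvexOn ℝ (O ×ˢ (Set.univ : Set (EuclideanSpace ℝ (Fin l))))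
      (fun p => φ p.1 p.2))
    (hφlip : ∀ x ∈ O, ∀ y ∈ O, ∀ u v : EuclideanSpace ℝ (Fin l),
      |φ x u - φ y v| ≤ Lφ * Real.sqrt (‖x - y‖ ^ 2 + ‖u - v‖ ^ 2))
    (c : EuclideanSpace ℝ (Fin d) → EuclideanSpace ℝ (Fin l))
    (hc : ContDiffOn ℝ 1 c O)
    (hcJ : ∀ x ∈ O, ∀ y ∈ O, ‖fderiv ℝ c x - fderiv ℝ c y‖ ≤ Lc * ‖x - y‖)
    (q : Fin l → EuclideanSpace ℝ (Fin d) → EuclideanSpace ℝ (Fin l))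
    (hq : ∀ j, ContDiffOn ℝ 1 (q j) O)
    (hqJ : ∀ j, ∀ x ∈ O, ∀ y ∈ O, ‖fderiv ℝ (q j) x - fderiv ℝ (q j) y‖ ≤ Lq * ‖x - y‖)
    (Pε : Measure (EuclideanSpace ℝ (Fin l))) [IsProbabilityMeasure Pε]
    (hmean : ∫ ε, ε ∂Pε = 0)
    (hsq : Integrable (fun ε : EuclideanSpace ℝ (Fin l) => ‖ε‖ ^ 2) Pε)
    (hcov : ∀ i j : Fin l, ∫ ε, ε i * ε j ∂Pε = if i = j then 1 else 0)
    (hintf : ∀ x ∈ O, Integrable (fun ε => φ x (c x + Qop q x ε)) Pε)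
    (hintF : ∀ z ∈ X, ∀ α : ℝ, ∀ x ∈ O, Integrable (fun ε => Ftil φ c q α z ε x) Pε)
    (τ : ℝ) (hτdef : τ = Lφ * (Lc + (l : ℝ) * Lq)) :
    ∀ z ∈ X, ∀ α : ℝ, 0 ≤ α →
      ((∀ x ∈ O,
          (∫ ε, φ x (c x + Qop q x ε) ∂Pε) + (α - τ) / 2 * ‖x - z‖ ^ 2 ≤
            ∫ ε, Ftil φ c q α z ε x ∂Pε ∧
          ∫ ε, Ftil φ c q α z ε x ∂Pε ≤
            (∫ ε, φ x (c x + Qop q x ε) ∂Pε) + (α + τ) / 2 * ‖x - z‖ ^ 2) ∧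
       (∀ ε, Ftil φ c q α z ε z = φ z (c z + Qop q z ε)) ∧
       (0 < α → ∀ ε, ConvexOn ℝ O (fun x => Ftil φ c q α z ε x - α / 2 * ‖x‖ ^ 2))) :=
  conceptual_surrogate_properties_general X O hXO hOopen hOconv φ Lφ Lc Lq hLφ hLq hφconv hφlip c hc
    hcJ q hq hqJ Pε hsq hcov hintf hintF τ hτdef

end
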